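/- Let A be a P-matrix (hence invertible), Ω₂ + M_{Ω₁} + φ_{Ω₁} invertible, and |ζ(u) − ζ(v)| ≤ Ψ|u − v| entrywise for all u, v ∈ ℝ^n with Ψ ≥ 0. Suppose ρ(L̄) < 1, where L̄ = |(Ω₂ + M_{Ω₁} + φ_{Ω₁})⁻¹|·(2|N_{Ω₁} + φ_{Ω₁}| + |M_{Ω₁} + φ_{Ω₁} − Ω₂| + 2|A|Ψ|A⁻¹|Ω₂). Let x*, z* satisfy Az* = γ⁻¹Ω₂(|x*| − x*) − q and the fixed-point equation (Ω₂ + M_{Ω₁} + φ_{Ω₁})x* = (N_{Ω₁} + φ_{Ω₁})x* + (Ω₂ − A_{Ω₁})|x*| − γAζ(z*) − γq. Then for every initial vector x^(0) the sequence x^(k) generated by Method 3.1 converges to x* and z^(k) converges to z*, which solves ICP(q,A,ζ). -/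

import Mathlib

open Matrix Filter Topology

noncomputable section

variable {n : ℕ}

/-- entrywise absolute value of a vector -/
def vecAbs (x : Fin n → ℝ) : Fin n → ℝ := fun i => |x i|

/-- entrywise absolute value of a matrix -/
def matAbs (A : Matrix (Fin n) (Fin n) ℝ) : Matrix (Fin n) (Fin n) ℝ :=
  Matrix.of fun i j => |A i j|

/-- positive diagonal matrix -/
def PosDiag (Ω : Matrix (Fin n) (Fin n) ℝ) : Prop := Ω.IsDiag ∧ ∀ i, 0 < Ω i i

/-- comparison matrix ⟨A⟩ -/
def compMat (A : Matrix (Fin n) (Fin n) ℝ) : Matrix (Fin n) (Fin n) ℝ :=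
  Matrix.of fun i j => if i = j then |A i j| else -|A i j|

/-- Z-matrix: nonpositive off-diagonal entries -/
def IsZmat (A : Matrix (Fin n) (Fin n) ℝ) : Prop := ∀ i j, i ≠ j → A i j ≤ 0

/-- nonsingular M-matrix: a Z-matrix, invertible, with entrywise nonnegative inverse -/
def IsMmat (A : Matrix (Fin n) (Fin n) ℝ) : Prop :=
  IsZmat A ∧ IsUnit A ∧ ∀ i j, 0 ≤ A⁻¹ i j

/-- H₊-matrix: comparison matrix is a nonsingular M-matrix, positive diagonal entries -/
def IsHplus (A : Matrix (Fin n) (Fin n) ℝ) : Prop :=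
  IsMmat (compMat A) ∧ ∀ i, 0 < A i i

/-- P-matrix: all principal minors are positive -/
def IsPmat (A : Matrix (Fin n) (Fin n) ℝ) : Prop :=
  ∀ s : Finset (Fin n),
    0 < (A.submatrix (fun i : {i // i ∈ s} => (i : Fin n))
          (fun i : {i // i ∈ s} => (i : Fin n))).det

/-- spectral radius, via the complex spectrum -/
def specRad (A : Matrix (Fin n) (Fin n) ℝ) : ℝ :=
  sSup ((fun μ : ℂ => ‖μ‖) '' spectrum ℂ (A.map Complex.ofReal))

/-- spectral (operator 2-) norm -/
def spec2Norm (A : Matrix (Fin n) (Fin n) ℝ) : ℝ :=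
  ‖Matrix.toEuclideanCLM (𝕜 := ℝ) A‖

/-- strict diagonal dominance -/
def SDD (A : Matrix (Fin n) (Fin n) ℝ) : Prop :=
  ∀ i, (∑ j ∈ Finset.univ.erase i, |A i j|) < |A i i|

/-- `z` solves the implicit complementarity problem ICP(q, A, ζ) -/
def SolvesICP (A : Matrix (Fin n) (Fin n) ℝ) (q : Fin n → ℝ)
    (ζ : (Fin n → ℝ) → (Fin n → ℝ)) (z : Fin n → ℝ) : Prop :=
  (∀ i, 0 ≤ (A.mulVec z + q) i) ∧ (∀ i, 0 ≤ (z - ζ z) i) ∧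
    (z - ζ z) ⬝ᵥ (A.mulVec z + q) = 0

/-- the sequences `x`, `z` are produced by Method 3.1 -/
def Method31 (A M N φ Ω₁ Ω₂ : Matrix (Fin n) (Fin n) ℝ) (q : Fin n → ℝ)
    (ζ : (Fin n → ℝ) → (Fin n → ℝ)) (γ : ℝ) (x z : ℕ → Fin n → ℝ) : Prop :=
  (∀ k, A *ᵥ z k = γ⁻¹ • (Ω₂ *ᵥ (vecAbs (x k) - x k)) - q) ∧
  (∀ k, x (k+1) = (Ω₂ + M * Ω₁ + φ * Ω₁)⁻¹ *ᵥ
      ((N * Ω₁ + φ * Ω₁) *ᵥ x k + (Ω₂ - A * Ω₁) *ᵥ vecAbs (x k)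
        - γ • (A *ᵥ ζ (z k)) - γ • q))


open scoped NNReal ENNReal

section AuxHelpers
variable {n : ℕ}

lemma vecAbs_apply (x : Fin n → ℝ) (i : Fin n) : vecAbs x i = |x i| := rfl

lemma vecAbs_nonneg' (x : Fin n → ℝ) (i : Fin n) : 0 ≤ vecAbs x i := abs_nonneg _

lemma matAbs_nonneg' (A : Matrix (Fin n) (Fin n) ℝ) (i j : Fin n) : 0 ≤ matAbs A i j := abs_nonneg _

lemma abs_mulVec_le (B : Matrix (Fin n) (Fin n) ℝ) (v : Fin n → ℝ) (i : Fin n) :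
    |(B *ᵥ v) i| ≤ (matAbs B *ᵥ vecAbs v) i := by
  simp only [Matrix.mulVec, dotProduct, matAbs, vecAbs, Matrix.of_apply]
  exact (Finset.abs_sum_le_sum_abs _ _).trans (le_of_eq (by simp [abs_mul]))

lemma mulVec_mono {B : Matrix (Fin n) (Fin n) ℝ} (hB : ∀ i j, 0 ≤ B i j)
    {u v : Fin n → ℝ} (h : ∀ i, u i ≤ v i) (i : Fin n) : (B *ᵥ u) i ≤ (B *ᵥ v) i := by
  simp only [Matrix.mulVec, dotProduct]
  exact Finset.sum_le_sum fun j _ => mul_le_mul_of_nonneg_left (h j) (hB i j)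

lemma mulVec_le_mulVec {B C : Matrix (Fin n) (Fin n) ℝ} {u v : Fin n → ℝ}
    (hBC : ∀ i j, |B i j| ≤ C i j) (hu : ∀ j, 0 ≤ u j) (huv : ∀ j, u j ≤ v j) (i : Fin n) :
    (matAbs B *ᵥ u) i ≤ (C *ᵥ v) i := by
  simp only [Matrix.mulVec, dotProduct, matAbs, Matrix.of_apply]
  exact Finset.sum_le_sum fun j _ =>
    mul_le_mul (hBC i j) (huv j) (hu j) ((abs_nonneg _).trans (hBC i j))

lemma diag_mulVec {Ω : Matrix (Fin n) (Fin n) ℝ} (hΩ : Ω.IsDiag) (v : Fin n → ℝ) (i : Fin n) :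
    (Ω *ᵥ v) i = Ω i i * v i := by
  rw [Matrix.mulVec, dotProduct]
  exact Finset.sum_eq_single i (fun j _ hj => by rw [hΩ (Ne.symm hj), zero_mul]) (by simp)

lemma mul_entries_nonneg {B C : Matrix (Fin n) (Fin n) ℝ} (hB : ∀ i j, 0 ≤ B i j)
    (hC : ∀ i j, 0 ≤ C i j) (i j : Fin n) : 0 ≤ (B * C) i j := by
  rw [Matrix.mul_apply]
  exact Finset.sum_nonneg fun k _ => mul_nonneg (hB i k) (hC k j)

lemma continuous_mulVec' (B : Matrix (Fin n) (Fin n) ℝ) :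
    Continuous fun v : Fin n → ℝ => B *ᵥ v := by
  have h := LinearMap.continuous_of_finiteDimensional (B.mulVecLin)
  have he : (fun v : Fin n → ℝ => B *ᵥ v) = ⇑B.mulVecLin := by
    funext v; rw [Matrix.mulVecLin_apply]
  rw [he]; exact h

lemma continuous_vecAbs' : Continuous (vecAbs (n := n)) :=
  continuous_pi fun i => (continuous_apply i).abs

end AuxHelpers

section SpectralPower
attribute [local instance] Matrix.linftyOpNormedRing Matrix.linftyOpNormedAlgebra

lemma pow_entry_tendsto_zero {n : ℕ} (B : Matrix (Fin n) (Fin n) ℝ) (h : specRad B < 1) :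
    ∃ c : ℕ → ℝ, Tendsto c atTop (𝓝 0) ∧ ∀ k i j, |(B ^ k) i j| ≤ c k := by
  rcases Nat.eq_zero_or_pos n with hn | hn
  · subst hn
    exact ⟨fun _ => 0, tendsto_const_nhds, fun k i j => i.elim0⟩
  haveI : Nonempty (Fin n) := ⟨⟨0, hn⟩⟩
  haveI : Nontrivial (Matrix (Fin n) (Fin n) ℂ) := by
    refine ⟨0, 1, fun hc => ?_⟩
    have := congrFun (congrFun hc ⟨0, hn⟩) ⟨0, hn⟩
    simpa [Matrix.one_apply] using this
  haveI : CompleteSpace (Matrix (Fin n) (Fin n) ℂ) := FiniteDimensional.complete ℂ _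
  set C : Matrix (Fin n) (Fin n) ℂ := B.map Complex.ofReal with hC
  have hmap : ∀ k : ℕ, (B ^ k).map Complex.ofReal = C ^ k := fun k => by
    exact map_pow (Complex.ofRealHom.mapMatrix) B k
  have hsp : spectralRadius ℂ C < 1 := by
    have h1 : spectralRadius ℂ C < ((1 : ℝ≥0) : ℝ≥0∞) := by
      apply spectrum.spectralRadius_lt_of_forall_lt
      intro μ hμ
      have hb : BddAbove ((fun μ : ℂ => ‖μ‖) '' spectrum ℂ C) :=
        ((spectrum.isCompact C).image continuous_norm).bddAbove
      have hle : ‖μ‖ ≤ specRad B := le_csSup hb ⟨μ, hμ, rfl⟩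
      have : ‖μ‖ < 1 := lt_of_le_of_lt hle h
      exact_mod_cast this
    simpa using h1
  obtain ⟨r, hr1, hr2⟩ := exists_between hsp
  have hrtop : r ≠ ⊤ := (hr2.trans_le le_top).ne
  set s : ℝ≥0 := r.toNNReal with hs
  have hrs : (s : ℝ≥0∞) = r := ENNReal.coe_toNNReal hrtop
  have hs1 : (s : ℝ) < 1 := by
    have : (s : ℝ≥0∞) < 1 := hrs ▸ hr2
    exact_mod_cast this
  have hs0 : (0:ℝ) ≤ s := s.coe_nonneg
  have hev : ∀ᶠ k : ℕ in atTop, ((‖C ^ k‖₊ : ℝ≥0∞) ^ (1 / (k:ℝ))) < r :=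
    (spectrum.pow_nnnorm_pow_one_div_tendsto_nhds_spectralRadius C).eventually_lt_const hr1
  refine ⟨fun k => ‖C ^ k‖, ?_, ?_⟩
  · apply squeeze_zero' (Eventually.of_forall fun k => norm_nonneg _)
      (g := fun k => (s:ℝ) ^ k) ?_ ?_
    · filter_upwards [hev, eventually_ge_atTop 1] with k hk hk1
      have hkne : (k : ℝ) ≠ 0 := by positivity
      have key : (‖C ^ k‖₊ : ℝ≥0∞) ≤ (s : ℝ≥0∞) ^ (k : ℕ) := by
        calc (‖C ^ k‖₊ : ℝ≥0∞)
            = ((‖C ^ k‖₊ : ℝ≥0∞) ^ (1/(k:ℝ))) ^ (k:ℝ) := by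
              rw [← ENNReal.rpow_mul, one_div, inv_mul_cancel₀ hkne, ENNReal.rpow_one]
          _ ≤ r ^ (k:ℝ) := ENNReal.rpow_le_rpow hk.le (by positivity)
          _ = (s : ℝ≥0∞) ^ (k : ℕ) := by rw [← hrs, ENNReal.rpow_natCast]
      rw [← ENNReal.coe_pow, ENNReal.coe_le_coe] at key
      calc ‖C ^ k‖ = ((‖C ^ k‖₊ : ℝ≥0) : ℝ) := rfl
        _ ≤ ((s ^ k : ℝ≥0) : ℝ) := by exact_mod_cast key
        _ = (s:ℝ) ^ k := by push_cast; ring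
    · exact tendsto_pow_atTop_nhds_zero_of_lt_one hs0 hs1
  · intro k i j
    have h1 : |(B ^ k) i j| = ‖(C ^ k) i j‖ := by
      rw [← hmap k]
      simp [Matrix.map_apply, Complex.norm_real, Real.norm_eq_abs]
    rw [h1]
    have h2 : ‖(C ^ k) i j‖₊ ≤ ‖C ^ k‖₊ := by
      rw [Matrix.linfty_opNNNorm_def]
      calc ‖(C ^ k) i j‖₊ ≤ ∑ j', ‖(C ^ k) i j'‖₊ :=
            Finset.single_le_sum (f := fun j' => ‖(C ^ k) i j'‖₊)
              (fun _ _ => by positivity) (Finset.mem_univ j)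
        _ ≤ _ := Finset.le_sup (f := fun i => ∑ j', ‖(C ^ k) i j'‖₊) (Finset.mem_univ i)
    exact_mod_cast h2

end SpectralPower

theorem stmt6 (A M N φ Ω₁ Ω₂ Ψ : Matrix (Fin n) (Fin n) ℝ)
    (q : Fin n → ℝ) (ζ : (Fin n → ℝ) → (Fin n → ℝ)) (γ : ℝ)
    (hγ : 0 < γ) (hΩ₁ : PosDiag Ω₁) (hΩ₂ : PosDiag Ω₂) (hφ : φ.IsDiag)
    (hsplit : A = (M + φ) - (N + φ))
    (hP : IsPmat A)
    (hA : IsUnit A) (hW : IsUnit (Ω₂ + M * Ω₁ + φ * Ω₁))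
    (hΨ : ∀ i j, 0 ≤ Ψ i j)
    (hLip : ∀ u v : Fin n → ℝ, ∀ i, |(ζ u - ζ v) i| ≤ (Ψ *ᵥ vecAbs (u - v)) i)
    (x z : ℕ → Fin n → ℝ) (hmthd : Method31 A M N φ Ω₁ Ω₂ q ζ γ x z)
    (xs zs : Fin n → ℝ)
    (hzs : A *ᵥ zs = γ⁻¹ • (Ω₂ *ᵥ (vecAbs xs - xs)) - q)
    (hfix : (Ω₂ + M * Ω₁ + φ * Ω₁) *ᵥ xs =
      (N * Ω₁ + φ * Ω₁) *ᵥ xs + (Ω₂ - A * Ω₁) *ᵥ vecAbs xs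
        - γ • (A *ᵥ ζ zs) - γ • q)
    (hρ : specRad (matAbs (Ω₂ + M * Ω₁ + φ * Ω₁)⁻¹ *
      ((2 : ℝ) • matAbs (N * Ω₁ + φ * Ω₁) + matAbs (M * Ω₁ + φ * Ω₁ - Ω₂)
        + (2 : ℝ) • (matAbs A * Ψ * matAbs A⁻¹ * Ω₂))) < 1) :
    Tendsto x atTop (𝓝 xs) ∧ Tendsto z atTop (𝓝 zs) ∧ SolvesICP A q ζ zs := by
  obtain ⟨hm1, hm2⟩ := hmthd
  have hγne : γ ≠ 0 := ne_of_gt hγ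
  have hγipos : 0 < γ⁻¹ := inv_pos.mpr hγ
  have hAdet : IsUnit A.det := (Matrix.isUnit_iff_isUnit_det A).mp hA
  have hWdet : IsUnit (Ω₂ + M * Ω₁ + φ * Ω₁).det := (Matrix.isUnit_iff_isUnit_det _).mp hW
  have cancelA : ∀ v : Fin n → ℝ, A⁻¹ *ᵥ (A *ᵥ v) = v := fun v => by
    rw [Matrix.mulVec_mulVec, Matrix.nonsing_inv_mul A hAdet, Matrix.one_mulVec]
  have cancelW : ∀ v : Fin n → ℝ,
      (Ω₂ + M * Ω₁ + φ * Ω₁)⁻¹ *ᵥ ((Ω₂ + M * Ω₁ + φ * Ω₁) *ᵥ v) = v := fun v => by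
    rw [Matrix.mulVec_mulVec, Matrix.nonsing_inv_mul _ hWdet, Matrix.one_mulVec]
  have hAΩ : A * Ω₁ = (M * Ω₁ + φ * Ω₁) - (N * Ω₁ + φ * Ω₁) := by
    rw [hsplit]; noncomm_ring
  have hΩ₂e : ∀ i j, 0 ≤ Ω₂ i j := fun i j => by
    by_cases hij : i = j
    · subst hij; exact (hΩ₂.2 i).le
    · exact le_of_eq (hΩ₂.1 hij).symm
  -- derive the key identity for zs - ζ zs
  have h1 : γ • (A *ᵥ zs) = Ω₂ *ᵥ vecAbs xs - Ω₂ *ᵥ xs - γ • q := by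
    rw [hzs, smul_sub, smul_smul, mul_inv_cancel₀ hγne, one_smul, Matrix.mulVec_sub]
  have h2' : γ • (A *ᵥ ζ zs) = ((N * Ω₁ + φ * Ω₁) *ᵥ xs + (Ω₂ - A * Ω₁) *ᵥ vecAbs xs
      - γ • q) - (Ω₂ + M * Ω₁ + φ * Ω₁) *ᵥ xs := by
    rw [eq_sub_iff_add_eq, hfix]; abel
  have key2 : Ω₁ *ᵥ (xs + vecAbs xs) = γ • (zs - ζ zs) := by
    have hAv : A *ᵥ (Ω₁ *ᵥ (xs + vecAbs xs)) = A *ᵥ (γ • (zs - ζ zs)) := by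
      rw [Matrix.mulVec_mulVec, Matrix.mulVec_smul, Matrix.mulVec_sub, smul_sub, h1, h2', hAΩ]
      simp only [Matrix.sub_mulVec, Matrix.add_mulVec, Matrix.mulVec_add]
      abel
    have hc := congrArg (fun v => A⁻¹ *ᵥ v) hAv
    simpa only [cancelA] using hc
  -- ICP
  have hAq : ∀ i, (A *ᵥ zs + q) i = γ⁻¹ * (Ω₂ i i * (vecAbs xs i - xs i)) := by
    intro i
    have h := congrFun hzs i
    simp only [Pi.sub_apply, Pi.smul_apply, smul_eq_mul] at h
    have hd := diag_mulVec hΩ₂.1 (vecAbs xs - xs) i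
    simp only [Pi.sub_apply] at hd
    simp only [Pi.add_apply, h, hd]
    ring
  have hzζ : ∀ i, (zs - ζ zs) i = γ⁻¹ * (Ω₁ i i * (xs i + vecAbs xs i)) := by
    intro i
    have h := congrFun key2 i
    rw [diag_mulVec hΩ₁.1] at h
    simp only [Pi.smul_apply, smul_eq_mul, Pi.add_apply, Pi.sub_apply] at h
    rw [Pi.sub_apply]
    field_simp
    linear_combination -h
  have solves : SolvesICP A q ζ zs := by
    refine ⟨?_, ?_, ?_⟩
    · intro i
      rw [show A.mulVec zs = A *ᵥ zs from rfl, hAq i]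
      exact mul_nonneg hγipos.le (mul_nonneg (hΩ₂.2 i).le
        (by simpa [vecAbs, sub_nonneg] using le_abs_self (xs i)))
    · intro i
      rw [hzζ i]
      have : 0 ≤ xs i + vecAbs xs i := by
        have := neg_abs_le (xs i)
        rw [vecAbs_apply]
        linarith
      exact mul_nonneg hγipos.le (mul_nonneg (hΩ₁.2 i).le this)
    · rw [dotProduct]
      apply Finset.sum_eq_zero
      intro i _
      rw [show A.mulVec zs = A *ᵥ zs from rfl, hzζ i, hAq i]
      have hz : (xs i + vecAbs xs i) * (vecAbs xs i - xs i) = 0 := by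
        rw [vecAbs_apply]
        rcases le_or_gt 0 (xs i) with hx | hx
        · rw [abs_of_nonneg hx]; ring
        · rw [abs_of_neg hx]; ring
      linear_combination (γ⁻¹ * Ω₁ i i * γ⁻¹ * Ω₂ i i) * hz
  -- convergence
  set L : Matrix (Fin n) (Fin n) ℝ := matAbs (Ω₂ + M * Ω₁ + φ * Ω₁)⁻¹ *
      ((2 : ℝ) • matAbs (N * Ω₁ + φ * Ω₁) + matAbs (M * Ω₁ + φ * Ω₁ - Ω₂)
        + (2 : ℝ) • (matAbs A * Ψ * matAbs A⁻¹ * Ω₂)) with hLdef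
  set w : ℕ → Fin n → ℝ := fun k => vecAbs (x k - xs) with hwdef
  have hKnn : ∀ i j, 0 ≤ ((2 : ℝ) • matAbs (N * Ω₁ + φ * Ω₁) + matAbs (M * Ω₁ + φ * Ω₁ - Ω₂)
        + (2 : ℝ) • (matAbs A * Ψ * matAbs A⁻¹ * Ω₂)) i j := by
    intro i j
    have t1 : 0 ≤ (matAbs A * Ψ * matAbs A⁻¹ * Ω₂) i j :=
      mul_entries_nonneg (fun a b => mul_entries_nonneg
        (fun a b => mul_entries_nonneg (matAbs_nonneg' A) hΨ a b) (matAbs_nonneg' _) a b)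
        hΩ₂e i j
    have t2 := matAbs_nonneg' (N * Ω₁ + φ * Ω₁) i j
    have t3 := matAbs_nonneg' (M * Ω₁ + φ * Ω₁ - Ω₂) i j
    simp only [Matrix.add_apply, Matrix.smul_apply, smul_eq_mul]
    linarith
  have hLnn : ∀ i j, 0 ≤ L i j := fun i j =>
    mul_entries_nonneg (matAbs_nonneg' _) hKnn i j
  have hstep : ∀ k i, w (k+1) i ≤ (L *ᵥ w k) i := by
    intro k i
    have hxk : x (k+1) - xs = (Ω₂ + M * Ω₁ + φ * Ω₁)⁻¹ *ᵥ
        ((N * Ω₁ + φ * Ω₁) *ᵥ (x k - xs) + (Ω₂ - A * Ω₁) *ᵥ (vecAbs (x k) - vecAbs xs)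
          - γ • (A *ᵥ (ζ (z k) - ζ zs))) := by
      have hxs : xs = (Ω₂ + M * Ω₁ + φ * Ω₁)⁻¹ *ᵥ ((N * Ω₁ + φ * Ω₁) *ᵥ xs
          + (Ω₂ - A * Ω₁) *ᵥ vecAbs xs - γ • (A *ᵥ ζ zs) - γ • q) := by
        rw [← hfix, cancelW]
      rw [hm2 k]
      conv_lhs => rw [hxs]
      rw [← Matrix.mulVec_sub]
      congr 1
      simp only [Matrix.mulVec_sub, Matrix.mulVec_add, smul_sub]
      abel
    have hzdiff : z k - zs = A⁻¹ *ᵥ (γ⁻¹ • (Ω₂ *ᵥ ((vecAbs (x k) - x k) - (vecAbs xs - xs)))) := by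
      have hv : A *ᵥ (z k - zs) = γ⁻¹ • (Ω₂ *ᵥ ((vecAbs (x k) - x k) - (vecAbs xs - xs))) := by
        rw [Matrix.mulVec_sub, hm1 k, hzs]
        simp only [Matrix.mulVec_sub, Matrix.mulVec_add, smul_sub]
        abel
      rw [← hv, cancelA]
    have hd' : ∀ j, |((vecAbs (x k) - x k) - (vecAbs xs - xs)) j| ≤ 2 * w k j := by
      intro j
      simp only [Pi.sub_apply, hwdef, vecAbs]
      have h2 := abs_abs_sub_abs_le_abs_sub (x k j) (xs j)
      have h3 := abs_sub (|x k j| - |xs j|) (x k j - xs j)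
      have h4 : |x k j| - x k j - (|xs j| - xs j) = (|x k j| - |xs j|) - (x k j - xs j) := by ring
      rw [h4]
      calc |(|x k j| - |xs j|) - (x k j - xs j)| ≤ abs (|x k j| - |xs j|) + |x k j - xs j| := h3
        _ ≤ 2 * |x k j - xs j| := by linarith
    have hzb : ∀ j, vecAbs (z k - zs) j ≤
        γ⁻¹ * ((matAbs A⁻¹ * Ω₂) *ᵥ fun l => 2 * w k l) j := by
      intro j
      rw [hzdiff]
      have e1 : vecAbs (A⁻¹ *ᵥ (γ⁻¹ • (Ω₂ *ᵥ ((vecAbs (x k) - x k) - (vecAbs xs - xs))))) j ≤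
          (matAbs A⁻¹ *ᵥ vecAbs (γ⁻¹ • (Ω₂ *ᵥ ((vecAbs (x k) - x k) - (vecAbs xs - xs))))) j :=
        abs_mulVec_le _ _ j
      refine e1.trans ?_
      have e2 : ∀ l, vecAbs (γ⁻¹ • (Ω₂ *ᵥ ((vecAbs (x k) - x k) - (vecAbs xs - xs)))) l ≤
          γ⁻¹ * (Ω₂ *ᵥ fun m => 2 * w k m) l := by
        intro l
        simp only [vecAbs, Pi.smul_apply, smul_eq_mul, abs_mul, abs_of_pos hγipos]
        apply mul_le_mul_of_nonneg_left ?_ hγipos.le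
        rw [diag_mulVec hΩ₂.1, diag_mulVec hΩ₂.1]
        rw [abs_mul, abs_of_nonneg (hΩ₂.2 l).le]
        exact mul_le_mul_of_nonneg_left (hd' l) (hΩ₂.2 l).le
      have e3 : (matAbs A⁻¹ *ᵥ vecAbs (γ⁻¹ • (Ω₂ *ᵥ ((vecAbs (x k) - x k) - (vecAbs xs - xs))))) j
          ≤ (matAbs A⁻¹ *ᵥ (γ⁻¹ • (Ω₂ *ᵥ fun m => 2 * w k m))) j := by
        apply mulVec_mono (matAbs_nonneg' _)
        intro l
        exact (e2 l).trans (le_of_eq rfl)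
      refine e3.trans (le_of_eq ?_)
      rw [Matrix.mulVec_smul, ← Matrix.mulVec_mulVec]
      simp
    have hsb : ∀ j, |(ζ (z k) - ζ zs) j| ≤
        γ⁻¹ * ((Ψ * (matAbs A⁻¹ * Ω₂)) *ᵥ fun l => 2 * w k l) j := by
      intro j
      refine (hLip (z k) zs j).trans ?_
      have := mulVec_mono hΨ hzb j
      refine this.trans (le_of_eq ?_)
      have : (fun l => γ⁻¹ * ((matAbs A⁻¹ * Ω₂) *ᵥ fun m => 2 * w k m) l)
          = γ⁻¹ • ((matAbs A⁻¹ * Ω₂) *ᵥ fun m => 2 * w k m) := rfl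
      rw [this, Matrix.mulVec_smul, ← Matrix.mulVec_mulVec]
      simp
    -- main component bound
    have hDb : ∀ i, |((N * Ω₁ + φ * Ω₁) *ᵥ (x k - xs) + (Ω₂ - A * Ω₁) *ᵥ (vecAbs (x k) - vecAbs xs)
          - γ • (A *ᵥ (ζ (z k) - ζ zs))) i| ≤
        (((2 : ℝ) • matAbs (N * Ω₁ + φ * Ω₁) + matAbs (M * Ω₁ + φ * Ω₁ - Ω₂)
        + (2 : ℝ) • (matAbs A * Ψ * matAbs A⁻¹ * Ω₂)) *ᵥ w k) i := by
      intro i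
      have t1 : |((N * Ω₁ + φ * Ω₁) *ᵥ (x k - xs)) i| ≤ (matAbs (N * Ω₁ + φ * Ω₁) *ᵥ w k) i :=
        abs_mulVec_le _ _ i
      have t2 : |((Ω₂ - A * Ω₁) *ᵥ (vecAbs (x k) - vecAbs xs)) i| ≤
          ((matAbs (M * Ω₁ + φ * Ω₁ - Ω₂) + matAbs (N * Ω₁ + φ * Ω₁)) *ᵥ w k) i := by
        refine (abs_mulVec_le _ _ i).trans ?_
        apply mulVec_le_mulVec ?_ (vecAbs_nonneg' _) ?_
        · intro a b
          have he : (Ω₂ - A * Ω₁) a b = -((M * Ω₁ + φ * Ω₁ - Ω₂) a b)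
              + (N * Ω₁ + φ * Ω₁) a b := by
            simp only [hAΩ, Matrix.sub_apply, Matrix.add_apply]; ring
          rw [he]
          refine (abs_add_le _ _).trans (le_of_eq ?_)
          simp [matAbs, Matrix.add_apply, Matrix.sub_apply, abs_sub_comm]
        · intro b
          simp only [vecAbs, Pi.sub_apply, hwdef]
          exact abs_abs_sub_abs_le_abs_sub _ _
      have t3 : |(γ • (A *ᵥ (ζ (z k) - ζ zs))) i| ≤
          (((2 : ℝ) • (matAbs A * Ψ * matAbs A⁻¹ * Ω₂)) *ᵥ w k) i := by
        have s1 : |(γ • (A *ᵥ (ζ (z k) - ζ zs))) i| = γ * |(A *ᵥ (ζ (z k) - ζ zs)) i| := by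
          simp [abs_mul, abs_of_pos hγ]
        rw [s1]
        have s2 : |(A *ᵥ (ζ (z k) - ζ zs)) i| ≤ (matAbs A *ᵥ vecAbs (ζ (z k) - ζ zs)) i :=
          abs_mulVec_le _ _ i
        have s3 : (matAbs A *ᵥ vecAbs (ζ (z k) - ζ zs)) i ≤
            (matAbs A *ᵥ (γ⁻¹ • ((Ψ * (matAbs A⁻¹ * Ω₂)) *ᵥ fun l => 2 * w k l))) i := by
          apply mulVec_mono (matAbs_nonneg' _)
          intro l
          exact hsb l
        have s4 : (matAbs A *ᵥ (γ⁻¹ • ((Ψ * (matAbs A⁻¹ * Ω₂)) *ᵥ fun l => 2 * w k l))) i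
            = γ⁻¹ * (((matAbs A * Ψ * matAbs A⁻¹ * Ω₂) *ᵥ fun l => 2 * w k l) i) := by
          rw [Matrix.mulVec_smul, Matrix.mulVec_mulVec]
          have : matAbs A * (Ψ * (matAbs A⁻¹ * Ω₂)) = matAbs A * Ψ * matAbs A⁻¹ * Ω₂ := by
            noncomm_ring
          rw [this]
          simp
        have s5 : ((matAbs A * Ψ * matAbs A⁻¹ * Ω₂) *ᵥ fun l => 2 * w k l) i
            = 2 * ((matAbs A * Ψ * matAbs A⁻¹ * Ω₂) *ᵥ w k) i := by
          have : (fun l => 2 * w k l) = (2:ℝ) • w k := rfl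
          rw [this, Matrix.mulVec_smul]
          simp
        have s6 : (((2 : ℝ) • (matAbs A * Ψ * matAbs A⁻¹ * Ω₂)) *ᵥ w k) i
            = 2 * ((matAbs A * Ψ * matAbs A⁻¹ * Ω₂) *ᵥ w k) i := by
          rw [Matrix.smul_mulVec]
          simp
        calc γ * |(A *ᵥ (ζ (z k) - ζ zs)) i|
            ≤ γ * (γ⁻¹ * (((matAbs A * Ψ * matAbs A⁻¹ * Ω₂) *ᵥ fun l => 2 * w k l) i)) := by
              apply mul_le_mul_of_nonneg_left _ hγ.le
              rw [← s4]
              exact s2.trans s3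
          _ = ((matAbs A * Ψ * matAbs A⁻¹ * Ω₂) *ᵥ fun l => 2 * w k l) i := by
              rw [← mul_assoc, mul_inv_cancel₀ hγne, one_mul]
          _ = (((2 : ℝ) • (matAbs A * Ψ * matAbs A⁻¹ * Ω₂)) *ᵥ w k) i := by rw [s5, s6]
      have habs : |((N * Ω₁ + φ * Ω₁) *ᵥ (x k - xs) + (Ω₂ - A * Ω₁) *ᵥ (vecAbs (x k) - vecAbs xs)
          - γ • (A *ᵥ (ζ (z k) - ζ zs))) i| ≤
          |((N * Ω₁ + φ * Ω₁) *ᵥ (x k - xs)) i| + |((Ω₂ - A * Ω₁) *ᵥ (vecAbs (x k) - vecAbs xs)) i|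
          + |(γ • (A *ᵥ (ζ (z k) - ζ zs))) i| := by
        simp only [Pi.sub_apply, Pi.add_apply]
        calc |((N * Ω₁ + φ * Ω₁) *ᵥ (x k - xs)) i + ((Ω₂ - A * Ω₁) *ᵥ (vecAbs (x k) - vecAbs xs)) i
            - (γ • (A *ᵥ (ζ (z k) - ζ zs))) i|
            ≤ |((N * Ω₁ + φ * Ω₁) *ᵥ (x k - xs)) i + ((Ω₂ - A * Ω₁) *ᵥ (vecAbs (x k) - vecAbs xs)) i|
              + |(γ • (A *ᵥ (ζ (z k) - ζ zs))) i| := abs_sub _ _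
          _ ≤ _ := by
              have := abs_add_le (((N * Ω₁ + φ * Ω₁) *ᵥ (x k - xs)) i)
                (((Ω₂ - A * Ω₁) *ᵥ (vecAbs (x k) - vecAbs xs)) i)
              linarith
      refine habs.trans ?_
      have hexp : (((2 : ℝ) • matAbs (N * Ω₁ + φ * Ω₁) + matAbs (M * Ω₁ + φ * Ω₁ - Ω₂)
          + (2 : ℝ) • (matAbs A * Ψ * matAbs A⁻¹ * Ω₂)) *ᵥ w k) i
          = 2 * (matAbs (N * Ω₁ + φ * Ω₁) *ᵥ w k) i + (matAbs (M * Ω₁ + φ * Ω₁ - Ω₂) *ᵥ w k) i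
          + (((2 : ℝ) • (matAbs A * Ψ * matAbs A⁻¹ * Ω₂)) *ᵥ w k) i := by
        simp only [Matrix.add_mulVec, Matrix.smul_mulVec, Pi.add_apply, Pi.smul_apply,
          smul_eq_mul]
      rw [hexp]
      have hexp2 : ((matAbs (M * Ω₁ + φ * Ω₁ - Ω₂) + matAbs (N * Ω₁ + φ * Ω₁)) *ᵥ w k) i
          = (matAbs (M * Ω₁ + φ * Ω₁ - Ω₂) *ᵥ w k) i + (matAbs (N * Ω₁ + φ * Ω₁) *ᵥ w k) i := by
        simp only [Matrix.add_mulVec, Pi.add_apply]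
      rw [hexp2] at t2
      linarith
    -- assemble
    have e0 : w (k+1) i = |((Ω₂ + M * Ω₁ + φ * Ω₁)⁻¹ *ᵥ
        ((N * Ω₁ + φ * Ω₁) *ᵥ (x k - xs) + (Ω₂ - A * Ω₁) *ᵥ (vecAbs (x k) - vecAbs xs)
          - γ • (A *ᵥ (ζ (z k) - ζ zs)))) i| := by
      simp only [hwdef, vecAbs, hxk]
    rw [e0]
    refine (abs_mulVec_le _ _ i).trans ?_
    have e1 : (matAbs (Ω₂ + M * Ω₁ + φ * Ω₁)⁻¹ *ᵥ vecAbs ((N * Ω₁ + φ * Ω₁) *ᵥ (x k - xs)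
        + (Ω₂ - A * Ω₁) *ᵥ (vecAbs (x k) - vecAbs xs) - γ • (A *ᵥ (ζ (z k) - ζ zs)))) i ≤
        (matAbs (Ω₂ + M * Ω₁ + φ * Ω₁)⁻¹ *ᵥ
          (((2 : ℝ) • matAbs (N * Ω₁ + φ * Ω₁) + matAbs (M * Ω₁ + φ * Ω₁ - Ω₂)
        + (2 : ℝ) • (matAbs A * Ψ * matAbs A⁻¹ * Ω₂)) *ᵥ w k)) i := by
      apply mulVec_mono (matAbs_nonneg' _)
      intro l
      exact hDb l
    refine e1.trans (le_of_eq ?_)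
    rw [Matrix.mulVec_mulVec]
  have hiter : ∀ k i, w k i ≤ ((L ^ k) *ᵥ w 0) i := by
    intro k
    induction k with
    | zero => intro i; rw [pow_zero, Matrix.one_mulVec]
    | succ k ih =>
      intro i
      calc w (k+1) i ≤ (L *ᵥ w k) i := hstep k i
        _ ≤ (L *ᵥ ((L ^ k) *ᵥ w 0)) i := mulVec_mono hLnn ih i
        _ = ((L ^ (k+1)) *ᵥ w 0) i := by rw [Matrix.mulVec_mulVec, ← pow_succ']
  obtain ⟨c, hc0, hcb⟩ := pow_entry_tendsto_zero L hρ
  have hwb : ∀ k i, w k i ≤ c k * (∑ j, w 0 j) := by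
    intro k i
    refine (hiter k i).trans ?_
    have e : ((L ^ k) *ᵥ w 0) i = ∑ j, (L ^ k) i j * w 0 j := rfl
    rw [e, Finset.mul_sum]
    exact Finset.sum_le_sum fun j _ =>
      mul_le_mul_of_nonneg_right ((le_abs_self _).trans (hcb k i j)) (vecAbs_nonneg' _ j)
  have hx0 : ∀ i, Tendsto (fun k => x k i) atTop (𝓝 (xs i)) := by
    intro i
    have h0 : Tendsto (fun k => w k i) atTop (𝓝 0) := by
      apply squeeze_zero (fun k => vecAbs_nonneg' _ i) (fun k => hwb k i)
      simpa using hc0.mul_const (∑ j, w 0 j)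
    have h1 : Tendsto (fun k => x k i - xs i) atTop (𝓝 0) := by
      rw [tendsto_zero_iff_abs_tendsto_zero]
      exact h0
    have h2 := h1.add_const (xs i)
    simpa using h2
  have hxt : Tendsto x atTop (𝓝 xs) := tendsto_pi_nhds.mpr hx0
  have hzt : Tendsto z atTop (𝓝 zs) := by
    have hzexp : ∀ k, z k = A⁻¹ *ᵥ (γ⁻¹ • (Ω₂ *ᵥ (vecAbs (x k) - x k)) - q) := fun k => by
      rw [← hm1 k, cancelA]
    have hzsexp : zs = A⁻¹ *ᵥ (γ⁻¹ • (Ω₂ *ᵥ (vecAbs xs - xs)) - q) := by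
      rw [← hzs, cancelA]
    have hF : Continuous fun v : Fin n → ℝ =>
        A⁻¹ *ᵥ (γ⁻¹ • (Ω₂ *ᵥ (vecAbs v - v)) - q) := by
      apply (continuous_mulVec' A⁻¹).comp
      exact (((continuous_mulVec' Ω₂).comp
        (continuous_vecAbs'.sub continuous_id)).const_smul γ⁻¹).sub continuous_const
    have hcomp := (hF.tendsto xs).comp hxt
    rw [hzsexp]
    have heq : (fun k => A⁻¹ *ᵥ (γ⁻¹ • (Ω₂ *ᵥ (vecAbs (x k) - x k)) - q)) = z := by
      funext k; rw [← hzexp k]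
    rw [← heq]
    exact hcomp
  exact ⟨hxt, hzt, solves⟩


end
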